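/- arXiv:2301.12358 — 3 statements merged into one kernel-verified Lean document; each statement's English description precedes it below -/
import Mathlib

section
/- Let ρ be a density matrix on a d-dimensional Hilbert space with spectral decomposition ρ = Σ_{k=0}^{d−1} E_k |u_k⟩⟨u_k|, E₀ > E₁ ≥ ⋯ ≥ E_{d−1}, and let O be a Hermitian operator with operator norm ‖O‖. Then the virtual-distillation estimate satisfies |Tr(Oρᵐ)/Tr(ρᵐ) − ⟨u₀|O|u₀⟩| ≤ 2‖O‖(d−1)(E₁/E₀)ᵐ for every m ≥ 1. -/
open Matrix

lemma vdeb_vecMulVec_mul_vecMulVec {n : Type*} [Fintype n] (a b c e : n → ℂ) :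
    Matrix.vecMulVec a b * Matrix.vecMulVec c e = (b ⬝ᵥ c) • Matrix.vecMulVec a e := by
  ext i j
  simp only [Matrix.mul_apply, Matrix.vecMulVec_apply, Matrix.smul_apply, smul_eq_mul,
    dotProduct, Finset.sum_mul]
  exact Finset.sum_congr rfl fun k _ => by ring

lemma vdeb_quadform_le {d : ℕ} (A : Matrix (Fin d) (Fin d) ℂ) (v : Fin d → ℂ)
    (hv : star v ⬝ᵥ v = 1) :
    ‖star v ⬝ᵥ A.mulVec v‖ ≤ ‖Matrix.toEuclideanCLM (𝕜 := ℂ) A‖ := by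
  set w : EuclideanSpace ℂ (Fin d) := (WithLp.equiv 2 _).symm v with hw
  have hwv : star v ⬝ᵥ A.mulVec v = @inner ℂ _ _ w (Matrix.toEuclideanCLM (𝕜 := ℂ) A w) := by
    rw [hw, WithLp.equiv_symm_apply, Matrix.toEuclideanCLM_toLp, EuclideanSpace.inner_toLp_toLp]
    exact dotProduct_comm _ _
  have hnw : ‖w‖ = 1 := by
    have h1 : (@inner ℂ _ _ w w) = 1 := by
      rw [hw, WithLp.equiv_symm_apply, EuclideanSpace.inner_toLp_toLp, dotProduct_comm, hv]
    have h3 : ‖w‖ ^ 2 = 1 := by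
      have h2 := norm_sq_eq_re_inner (𝕜 := ℂ) w
      rw [h1] at h2
      simpa using h2
    nlinarith [norm_nonneg w]
  calc ‖star v ⬝ᵥ A.mulVec v‖
      = ‖@inner ℂ _ _ w (Matrix.toEuclideanCLM (𝕜 := ℂ) A w)‖ := by rw [hwv]
    _ ≤ ‖w‖ * ‖Matrix.toEuclideanCLM (𝕜 := ℂ) A w‖ := norm_inner_le_norm _ _
    _ ≤ ‖w‖ * (‖Matrix.toEuclideanCLM (𝕜 := ℂ) A‖ * ‖w‖) := by
        gcongr
        exact (Matrix.toEuclideanCLM (𝕜 := ℂ) A).le_opNorm w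
    _ = ‖Matrix.toEuclideanCLM (𝕜 := ℂ) A‖ := by rw [hnw]; ring

theorem virtual_distillation_error_bound (d : ℕ) (hd : 2 ≤ d)
    (E : Fin d → ℝ) (u : Fin d → (Fin d → ℂ))
    (hu : ∀ k l : Fin d, star (u k) ⬝ᵥ u l = if k = l then 1 else 0)
    (hE0 : ∀ k : Fin d, 0 ≤ E k) (hEsum : ∑ k, E k = 1)
    (hgap : E ⟨1, by omega⟩ < E ⟨0, by omega⟩)
    (hmono : ∀ k l : Fin d, k ≤ l → E l ≤ E k)
    (ρ : Matrix (Fin d) (Fin d) ℂ)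
    (hρ : ρ = ∑ k, (E k : ℂ) • Matrix.vecMulVec (u k) (star (u k)))
    (O : Matrix (Fin d) (Fin d) ℂ) (hO : O.IsHermitian)
    (m : ℕ) (hm : 1 ≤ m) :
    ‖(O * ρ ^ m).trace / (ρ ^ m).trace -
        star (u ⟨0, by omega⟩) ⬝ᵥ O.mulVec (u ⟨0, by omega⟩)‖ ≤
      2 * ‖Matrix.toEuclideanCLM (𝕜 := ℂ) O‖ * ((d : ℝ) - 1) *
        (E ⟨1, by omega⟩ / E ⟨0, by omega⟩) ^ m := by
  have h0d : 0 < d := by omega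
  set k0 : Fin d := ⟨0, by omega⟩ with hk0
  set k1 : Fin d := ⟨1, by omega⟩ with hk1
  set C : ℝ := ‖Matrix.toEuclideanCLM (𝕜 := ℂ) O‖ with hC
  have hC0 : 0 ≤ C := norm_nonneg _
  set P : Fin d → Matrix (Fin d) (Fin d) ℂ := fun k => Matrix.vecMulVec (u k) (star (u k))
    with hP
  have hPmul : ∀ k l, P k * P l = if k = l then P k else 0 := by
    intro k l
    rw [hP]
    dsimp only
    rw [vdeb_vecMulVec_mul_vecMulVec, hu k l]
    split
    · next h => subst h; simp
    · simp
  -- powers of ρ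
  have hpow : ∀ n, 1 ≤ n → ρ ^ n = ∑ k, ((E k : ℂ) ^ n) • P k := by
    intro n hn
    induction n with
    | zero => omega
    | succ n ih =>
      by_cases hn0 : n = 0
      · subst hn0; simp [hρ]; rfl
      · have ihn := ih (by omega)
        rw [pow_succ, ihn, hρ, Finset.sum_mul_sum]
        refine Finset.sum_congr rfl fun k _ => ?_
        have : ∀ l, ((E k : ℂ) ^ n • P k) * ((E l : ℂ) • P l)
            = if l = k then ((E k : ℂ) ^ (n + 1)) • P k else 0 := by
          intro l
          rw [Matrix.smul_mul, Matrix.mul_smul, hPmul]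
          by_cases h : k = l
          · subst h
            rw [if_pos rfl, if_pos rfl, smul_smul, ← pow_succ]
          · simp [h, Ne.symm h]
        rw [Finset.sum_congr rfl fun l _ => this l, Finset.sum_ite_eq' Finset.univ k]
        simp
  have hρm := hpow m hm
  -- traces of projections
  have htrP : ∀ k, (P k).trace = 1 := by
    intro k
    have h := hu k k
    rw [if_pos rfl] at h
    calc (P k).trace = star (u k) ⬝ᵥ u k := by
          simp [hP, Matrix.trace, Matrix.diag, Matrix.vecMulVec_apply, dotProduct, mul_comm]
      _ = 1 := h
  set a : Fin d → ℂ := fun k => star (u k) ⬝ᵥ O.mulVec (u k) with ha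
  have htrOP : ∀ k, (O * P k).trace = a k := by
    intro k
    calc (O * P k).trace = ∑ i, ∑ j, O i j * (u k j * (star (u k)) i) := by
          simp [Matrix.trace, Matrix.diag, Matrix.mul_apply, hP, Matrix.vecMulVec_apply]
      _ = ∑ i, (star (u k)) i * ∑ j, O i j * u k j := by
          refine Finset.sum_congr rfl fun i _ => ?_
          rw [Finset.mul_sum]
          exact Finset.sum_congr rfl fun j _ => by ring
      _ = a k := rfl
  have haC : ∀ k, ‖a k‖ ≤ C := by
    intro k
    have h := hu k k
    rw [if_pos rfl] at h
    exact vdeb_quadform_le O (u k) h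
  -- the traces
  have htr1 : (ρ ^ m).trace = (∑ k, (E k : ℝ) ^ m : ℝ) := by
    rw [hρm, Matrix.trace_sum]
    push_cast
    refine Finset.sum_congr rfl fun k _ => ?_
    rw [Matrix.trace_smul, htrP k]
    simp
  have htr2 : (O * ρ ^ m).trace = ∑ k, ((E k : ℂ) ^ m) * a k := by
    rw [hρm, Finset.mul_sum, Matrix.trace_sum]
    refine Finset.sum_congr rfl fun k _ => ?_
    rw [Matrix.mul_smul, Matrix.trace_smul, htrOP k]
    simp
  set S : ℝ := ∑ k, (E k) ^ m with hS
  have hE0pos : 0 < E k0 := lt_of_le_of_lt (hE0 k1) hgap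
  have hSge : (E k0) ^ m ≤ S :=
    Finset.single_le_sum (fun k _ => pow_nonneg (hE0 k) m) (Finset.mem_univ k0)
  have hSpos : 0 < S := lt_of_lt_of_le (pow_pos hE0pos m) hSge
  -- rewrite the difference
  have hdiff : (O * ρ ^ m).trace / (ρ ^ m).trace - a k0
      = (∑ k, ((E k : ℂ) ^ m) * (a k - a k0)) / (S : ℂ) := by
    rw [htr2, htr1]
    have hSne : (S : ℂ) ≠ 0 := by exact_mod_cast hSpos.ne'
    rw [div_sub' hSne]
    congr 1
    rw [hS]
    push_cast
    rw [Finset.sum_mul, ← Finset.sum_sub_distrib]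
    exact Finset.sum_congr rfl fun k _ => by ring
  rw [hdiff]
  have hnormS : ‖((S : ℝ) : ℂ)‖ = S := by
    rw [Complex.norm_real, Real.norm_eq_abs, abs_of_pos hSpos]
  rw [norm_div, hnormS]
  -- bound the numerator
  have hnum : ‖∑ k, ((E k : ℂ) ^ m) * (a k - a k0)‖
      ≤ ((d : ℝ) - 1) * (E k1) ^ m * (2 * C) := by
    calc ‖∑ k, ((E k : ℂ) ^ m) * (a k - a k0)‖
        ≤ ∑ k, ‖((E k : ℂ) ^ m) * (a k - a k0)‖ := norm_sum_le _ _
      _ = ∑ k, (E k) ^ m * ‖a k - a k0‖ := by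
          refine Finset.sum_congr rfl fun k _ => ?_
          rw [norm_mul]
          congr 1
          rw [← Complex.ofReal_pow, Complex.norm_real, Real.norm_eq_abs,
            abs_of_nonneg (pow_nonneg (hE0 k) m)]
      _ = ∑ k ∈ Finset.univ.erase k0, (E k) ^ m * ‖a k - a k0‖ := by
          rw [← Finset.add_sum_erase _ _ (Finset.mem_univ k0)]
          simp
      _ ≤ ∑ k ∈ Finset.univ.erase k0, (E k1) ^ m * (2 * C) := by
          refine Finset.sum_le_sum fun k hk => ?_
          have hk0k : k ≠ k0 := Finset.ne_of_mem_erase hk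
          have hk1le : k1 ≤ k := by
            rw [hk1]
            have : (0 : ℕ) < k.val := by
              rcases Nat.eq_zero_or_pos k.val with h | h
              · exact absurd (Fin.ext h) hk0k
              · exact h
            exact Fin.mk_le_of_le_val this
          have hEk : E k ≤ E k1 := hmono k1 k hk1le
          have h1 : (E k) ^ m ≤ (E k1) ^ m := pow_le_pow_left₀ (hE0 k) hEk m
          have h2 : ‖a k - a k0‖ ≤ 2 * C := by
            calc ‖a k - a k0‖ ≤ ‖a k‖ + ‖a k0‖ := norm_sub_le _ _
              _ ≤ C + C := add_le_add (haC k) (haC k0)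
              _ = 2 * C := by ring
          exact mul_le_mul h1 h2 (norm_nonneg _) (pow_nonneg (hE0 k1) m)
      _ = ((d : ℝ) - 1) * (E k1) ^ m * (2 * C) := by
          rw [Finset.sum_const, Finset.card_erase_of_mem (Finset.mem_univ k0)]
          simp only [Finset.card_univ, Fintype.card_fin, nsmul_eq_mul]
          rw [Nat.cast_sub (by omega)]
          push_cast
          ring
  calc ‖∑ k, ((E k : ℂ) ^ m) * (a k - a k0)‖ / S
      ≤ (((d : ℝ) - 1) * (E k1) ^ m * (2 * C)) / S := by
        gcongr
      _ ≤ (((d : ℝ) - 1) * (E k1) ^ m * (2 * C)) / (E k0) ^ m := by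
        have hd1 : (0:ℝ) ≤ ((d : ℝ) - 1) * (E k1) ^ m * (2 * C) := by
          have h1d : (1:ℝ) ≤ (d : ℝ) := by exact_mod_cast Nat.one_le_of_lt hd
          apply mul_nonneg (mul_nonneg (by linarith) (pow_nonneg (hE0 k1) m))
          linarith
        exact div_le_div_of_nonneg_left hd1 (pow_pos hE0pos m) hSge
      _ = 2 * C * ((d : ℝ) - 1) * (E k1 / E k0) ^ m := by
        rw [div_pow]
        field_simp
end

section
/- Let ρ be a density matrix with unique top eigenvalue E₀ and eigenvector |u₀⟩, and O a Hermitian operator. Then the sequence Tr(Oρᵐ)/Tr(ρᵐ) converges to ⟨u₀|O|u₀⟩ as m → ∞. -/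
open Matrix Filter

/-- Let `ρ = Σ_k E_k |u_k⟩⟨u_k|` be a density matrix whose top
eigenvalue `E₀` is strictly larger than all other eigenvalues, with unit
eigenvector `|u₀⟩`, and let `O` be a Hermitian operator. Then
`Tr(Oρᵐ)/Tr(ρᵐ) → ⟨u₀|O|u₀⟩` as `m → ∞`. -/
theorem virtual_distillation_tendsto (d : ℕ) (hd : 1 ≤ d)
    (E : Fin d → ℝ) (u : Fin d → (Fin d → ℂ))
    (hu : ∀ k l : Fin d, star (u k) ⬝ᵥ u l = if k = l then 1 else 0)
    (hE0 : ∀ k : Fin d, 0 ≤ E k) (hEsum : ∑ k, E k = 1)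
    (hgap : ∀ k : Fin d, k ≠ ⟨0, by omega⟩ → E k < E ⟨0, by omega⟩)
    (ρ : Matrix (Fin d) (Fin d) ℂ)
    (hρ : ρ = ∑ k, (E k : ℂ) • Matrix.vecMulVec (u k) (star (u k)))
    (O : Matrix (Fin d) (Fin d) ℂ) (hO : O.IsHermitian) :
    Tendsto (fun m : ℕ => (O * ρ ^ m).trace / (ρ ^ m).trace) atTop
      (nhds (star (u ⟨0, by omega⟩) ⬝ᵥ O.mulVec (u ⟨0, by omega⟩))) := by
  set i0 : Fin d := ⟨0, by omega⟩ with hi0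
  set P : Fin d → Matrix (Fin d) (Fin d) ℂ :=
    fun k => vecMulVec (u k) (star (u k)) with hP
  set c : Fin d → ℂ := fun k => star (u k) ⬝ᵥ O.mulVec (u k) with hc
  -- product of projectors
  have hPmul : ∀ k l, P k * P l = if k = l then P k else 0 := by
    intro k l
    have h1 : P k * P l = (star (u k) ⬝ᵥ u l) • vecMulVec (u k) (star (u l)) := by
      ext i j
      simp [hP, mul_apply, vecMulVec_apply, dotProduct, Finset.sum_mul, Finset.mul_sum]
      exact Finset.sum_congr rfl fun x _ => by ring
    rw [h1, hu]
    split
    · next h => subst h; simp [hP]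
    · simp
  -- powers of ρ
  have hpow : ∀ m : ℕ, ρ ^ (m + 1) = ∑ k, ((E k : ℂ)) ^ (m + 1) • P k := by
    intro m
    induction m with
    | zero => simpa using hρ
    | succ m ih =>
      rw [pow_succ, ih, hρ, Finset.sum_mul_sum]
      refine Finset.sum_congr rfl fun k _ => ?_
      rw [Finset.sum_eq_single k]
      · rw [smul_mul_assoc, mul_smul_comm, hPmul, if_pos rfl, smul_smul]
        ring_nf
      · intro l _ hl
        rw [smul_mul_assoc, mul_smul_comm, hPmul, if_neg (Ne.symm hl), smul_zero, smul_zero]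
      · intro h; exact absurd (Finset.mem_univ k) h
  -- traces
  have htrP : ∀ k, (P k).trace = 1 := by
    intro k
    have h := hu k k
    rw [if_pos rfl] at h
    simp only [dotProduct] at h
    simp only [hP, trace, diag, vecMulVec_apply]
    rw [← h]
    exact Finset.sum_congr rfl fun x _ => by ring
  have htrOP : ∀ k, (O * P k).trace = c k := by
    intro k
    simp only [hP, hc, trace, mul_apply, vecMulVec_apply, dotProduct, mulVec, diag,
      Finset.mul_sum]
    exact Finset.sum_congr rfl fun x _ => Finset.sum_congr rfl fun y _ => by ring
  have htr1 : ∀ m : ℕ, (ρ ^ (m + 1)).trace = ∑ k, ((E k : ℂ)) ^ (m + 1) := by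
    intro m
    rw [hpow m, trace_sum]
    exact Finset.sum_congr rfl fun k _ => by rw [trace_smul, htrP, smul_eq_mul, mul_one]
  have htr2 : ∀ m : ℕ, (O * ρ ^ (m + 1)).trace = ∑ k, ((E k : ℂ)) ^ (m + 1) * c k := by
    intro m
    rw [hpow m, Finset.mul_sum, trace_sum]
    exact Finset.sum_congr rfl fun k _ => by
      rw [mul_smul_comm, trace_smul, htrOP, smul_eq_mul]
  -- positivity of top eigenvalue
  have hE0pos : 0 < E i0 := by
    by_contra h
    push_neg at h
    have hle : ∀ k ∈ Finset.univ, E k ≤ 0 := by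
      intro k _
      by_cases hk : k = i0
      · subst hk; exact h
      · exact le_of_lt (lt_of_lt_of_le (hgap k hk) h)
    have := Finset.sum_nonpos hle
    rw [hEsum] at this; linarith
  set r : Fin d → ℝ := fun k => E k / E i0 with hr
  have hr0 : r i0 = 1 := div_self hE0pos.ne'
  have hrlt : ∀ k, k ≠ i0 → |r k| < 1 := by
    intro k hk
    rw [abs_of_nonneg (div_nonneg (hE0 k) hE0pos.le)]
    exact (div_lt_one hE0pos).2 (hgap k hk)
  -- limits
  have hnum : Tendsto (fun m : ℕ => ∑ k, ((r k : ℂ)) ^ m * c k) atTop (nhds (c i0)) := by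
    have : Tendsto (fun m : ℕ => ∑ k, ((r k : ℂ)) ^ m * c k) atTop
        (nhds (∑ k, if k = i0 then c i0 else 0)) := by
      refine tendsto_finset_sum _ fun k _ => ?_
      by_cases hk : k = i0
      · subst hk
        simp [hr0]
      · simp only [if_neg hk]
        have h0 : Tendsto (fun m : ℕ => ((r k : ℂ)) ^ m) atTop (nhds 0) := by
          apply tendsto_pow_atTop_nhds_zero_of_norm_lt_one
          simpa [Complex.norm_real] using hrlt k hk
        simpa using h0.mul_const (c k)
    simpa using this
  have hden : Tendsto (fun m : ℕ => ∑ k, ((r k : ℂ)) ^ m) atTop (nhds 1) := by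
    have : Tendsto (fun m : ℕ => ∑ k, ((r k : ℂ)) ^ m) atTop
        (nhds (∑ k, if k = i0 then (1 : ℂ) else 0)) := by
      refine tendsto_finset_sum _ fun k _ => ?_
      by_cases hk : k = i0
      · subst hk
        rw [if_pos rfl]
        exact Tendsto.congr (fun m => by simp [hr0]) tendsto_const_nhds
      · simp only [if_neg hk]
        apply tendsto_pow_atTop_nhds_zero_of_norm_lt_one
        simpa [Complex.norm_real] using hrlt k hk
    simpa using this
  have hlim : Tendsto (fun m : ℕ => (∑ k, ((r k : ℂ)) ^ m * c k) / (∑ k, ((r k : ℂ)) ^ m))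
      atTop (nhds (c i0)) := by
    have h := hnum.div hden one_ne_zero
    rw [div_one] at h
    exact h
  refine Tendsto.congr' ?_ hlim
  filter_upwards [eventually_ge_atTop 1] with m hm
  obtain ⟨n, rfl⟩ : ∃ n, m = n + 1 := ⟨m - 1, by omega⟩
  have hEk : ∀ k, (E k : ℂ) = (E i0 : ℂ) * (r k : ℂ) := by
    intro k
    have h0 : (E i0 : ℂ) ≠ 0 := by exact_mod_cast hE0pos.ne'
    rw [hr]
    push_cast
    rw [mul_comm, div_mul_cancel₀ _ h0]
  have hne : ((E i0 : ℂ)) ^ (n + 1) ≠ 0 := by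
    apply pow_ne_zero
    exact_mod_cast hE0pos.ne'
  rw [htr1, htr2]
  have e1 : ∑ k, ((E k : ℂ)) ^ (n + 1) * c k
      = ((E i0 : ℂ)) ^ (n + 1) * ∑ k, ((r k : ℂ)) ^ (n + 1) * c k := by
    rw [Finset.mul_sum]
    exact Finset.sum_congr rfl fun k _ => by rw [hEk k, mul_pow, mul_assoc]
  have e2 : ∑ k, ((E k : ℂ)) ^ (n + 1)
      = ((E i0 : ℂ)) ^ (n + 1) * ∑ k, ((r k : ℂ)) ^ (n + 1) := by
    rw [Finset.mul_sum]
    exact Finset.sum_congr rfl fun k _ => by rw [hEk k, mul_pow]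
  rw [e1, e2, mul_div_mul_left _ _ hne]
end

section
/- Let ρ_noise = (1−γ)|φ⟩⟨φ| + γ I/d be the output of the global depolarizing channel applied to a pure state on a d-dimensional space, with γ ∈ (0,1). Then for any Hermitian O and any m ≥ 1, Tr(O ρ_noiseᵐ)/Tr(ρ_noiseᵐ) = (λᵐ ⟨φ|O|φ⟩ + μᵐ (Tr O − ⟨φ|O|φ⟩)) / (λᵐ + (d−1)μᵐ), where λ = 1−γ+γ/d and μ = γ/d; in particular this ratio converges to ⟨φ|O|φ⟩ as m → ∞. -/
open Matrix Filter

/-- Let `ρ_noise = (1−γ)|φ⟩⟨φ| + γ I/d` with `|φ⟩` a unit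
vector in a `d`-dimensional space (`d ≥ 2`) and `γ ∈ (0,1)`. Then for any
Hermitian `O` and any `m ≥ 1`, with `λ = 1−γ+γ/d` and `μ = γ/d`,
`Tr(O ρ_noiseᵐ)/Tr(ρ_noiseᵐ)
  = (λᵐ ⟨φ|O|φ⟩ + μᵐ (Tr O − ⟨φ|O|φ⟩)) / (λᵐ + (d−1) μᵐ)`;
in particular the ratio converges to `⟨φ|O|φ⟩` as `m → ∞`. -/
theorem depolarizing_virtual_distillation (d : ℕ) (hd : 2 ≤ d)
    (φ : Fin d → ℂ) (hφ : star φ ⬝ᵥ φ = 1)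
    (γ : ℝ) (hγ : γ ∈ Set.Ioo (0 : ℝ) 1)
    (O : Matrix (Fin d) (Fin d) ℂ) (hO : O.IsHermitian)
    (ρn : Matrix (Fin d) (Fin d) ℂ)
    (hρn : ρn = ((1 - γ : ℝ) : ℂ) • Matrix.vecMulVec φ (star φ) +
        ((γ / d : ℝ) : ℂ) • (1 : Matrix (Fin d) (Fin d) ℂ))
    (lam mu : ℝ) (hlam : lam = 1 - γ + γ / d) (hmu : mu = γ / d) :
    (∀ m : ℕ, 1 ≤ m →
      (O * ρn ^ m).trace / (ρn ^ m).trace =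
        ((lam : ℂ) ^ m * (star φ ⬝ᵥ O.mulVec φ) +
          (mu : ℂ) ^ m * (O.trace - star φ ⬝ᵥ O.mulVec φ)) /
        ((lam : ℂ) ^ m + ((d : ℂ) - 1) * (mu : ℂ) ^ m)) ∧
    Tendsto (fun m : ℕ => (O * ρn ^ m).trace / (ρn ^ m).trace) atTop
      (nhds (star φ ⬝ᵥ O.mulVec φ)) := by
  obtain ⟨hγ0, hγ1⟩ := hγ
  have hd0 : (0:ℝ) < d := by positivity
  set P : Matrix (Fin d) (Fin d) ℂ := Matrix.vecMulVec φ (star φ) with hP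
  set A : ℂ := star φ ⬝ᵥ O.mulVec φ with hA
  have hdot : ∑ k, star (φ k) * φ k = 1 := hφ
  -- P is idempotent
  have hP2 : P * P = P := by
    ext i j
    simp only [hP, Matrix.mul_apply, Matrix.vecMulVec_apply, Pi.star_apply]
    calc ∑ k, φ i * star (φ k) * (φ k * star (φ j))
        = (φ i * star (φ j)) * ∑ k, star (φ k) * φ k := by
          rw [Finset.mul_sum]; exact Finset.sum_congr rfl fun k _ => by ring
      _ = φ i * star (φ j) := by rw [hdot, mul_one]
  have htrP : P.trace = 1 := by
    simp only [hP, Matrix.trace, Matrix.diag, Matrix.vecMulVec_apply, Pi.star_apply]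
    rw [← hdot]; exact Finset.sum_congr rfl fun k _ => mul_comm _ _
  have htrOP : (O * P).trace = A := by
    simp only [hP, hA, Matrix.trace, Matrix.diag, Matrix.mul_apply,
      Matrix.vecMulVec_apply, Pi.star_apply, dotProduct, Matrix.mulVec,
      Finset.mul_sum]
    exact Finset.sum_congr rfl fun i _ => Finset.sum_congr rfl fun k _ => by ring
  have hmulam : (mu : ℝ) < lam := by
    rw [hlam, hmu]; nlinarith
  have hmu0 : (0:ℝ) < mu := by rw [hmu]; positivity
  have hlam0 : (0:ℝ) < lam := lt_trans hmu0 hmulam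
  have hρn' : ρn = (((lam:ℂ)) - (mu:ℂ)) • P + ((mu:ℂ)) • (1 : Matrix (Fin d) (Fin d) ℂ) := by
    rw [hρn, hlam, hmu]; push_cast; ring_nf
  -- powers of ρn
  have hpow : ∀ m : ℕ, ρn ^ m =
      ((lam:ℂ) ^ m - (mu:ℂ) ^ m) • P + ((mu:ℂ) ^ m) • (1 : Matrix (Fin d) (Fin d) ℂ) := by
    intro m
    induction m with
    | zero => simp
    | succ m ih =>
      rw [pow_succ, ih, hρn']
      simp only [add_mul, mul_add, Matrix.smul_mul, Matrix.mul_smul, smul_smul,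
        mul_one, one_mul, hP2]
      match_scalars <;> ring
  have htr : ∀ m : ℕ, (ρn ^ m).trace = (lam:ℂ) ^ m + ((d:ℂ) - 1) * (mu:ℂ) ^ m := by
    intro m
    rw [hpow m]
    simp [Matrix.trace_smul, htrP, Matrix.trace_one]
    ring
  have htrO : ∀ m : ℕ, (O * ρn ^ m).trace =
      (lam:ℂ) ^ m * A + (mu:ℂ) ^ m * (O.trace - A) := by
    intro m
    rw [hpow m, mul_add, Matrix.mul_smul, Matrix.mul_smul, mul_one,
      Matrix.trace_add, Matrix.trace_smul, Matrix.trace_smul, htrOP]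
    simp only [smul_eq_mul]
    ring
  constructor
  · intro m _
    rw [htr m, htrO m]
  · -- convergence
    set r : ℝ := mu / lam with hr
    have hr0 : 0 < r := div_pos hmu0 hlam0
    have hr1 : r < 1 := (div_lt_one hlam0).mpr hmulam
    have hrC : Tendsto (fun m : ℕ => ((r:ℂ)) ^ m) atTop (nhds 0) := by
      apply tendsto_pow_atTop_nhds_zero_of_norm_lt_one
      rw [Complex.norm_real, Real.norm_eq_abs, abs_of_pos hr0]; exact hr1
    have hmu' : (mu:ℂ) = (r:ℂ) * (lam:ℂ) := by
      rw [hr]; push_cast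
      rw [div_mul_cancel₀]
      exact_mod_cast hlam0.ne'
    have key : ∀ m : ℕ, (O * ρn ^ m).trace / (ρn ^ m).trace =
        (A + (r:ℂ) ^ m * (O.trace - A)) / (1 + ((d:ℂ) - 1) * (r:ℂ) ^ m) := by
      intro m
      rw [htr m, htrO m]
      have hden1 : (lam:ℂ) ^ m + ((d:ℂ) - 1) * (mu:ℂ) ^ m ≠ 0 := by
        have : ((lam ^ m + (d - 1) * mu ^ m : ℝ) : ℂ) =
            (lam:ℂ) ^ m + ((d:ℂ) - 1) * (mu:ℂ) ^ m := by push_cast; ring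
        rw [← this]
        have : (0:ℝ) < lam ^ m + (d - 1) * mu ^ m := by
          have h1 : (1:ℝ) ≤ (d:ℝ) := by exact_mod_cast Nat.one_le_of_lt hd
          have := pow_pos hlam0 m
          have := pow_pos hmu0 m
          nlinarith
        exact_mod_cast ne_of_gt this
      have hden2 : (1:ℂ) + ((d:ℂ) - 1) * (r:ℂ) ^ m ≠ 0 := by
        have : ((1 + (d - 1) * r ^ m : ℝ) : ℂ) =
            (1:ℂ) + ((d:ℂ) - 1) * (r:ℂ) ^ m := by push_cast; ring
        rw [← this]
        have : (0:ℝ) < 1 + (d - 1) * r ^ m := by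
          have h1 : (1:ℝ) ≤ (d:ℝ) := by exact_mod_cast Nat.one_le_of_lt hd
          have := pow_pos hr0 m
          nlinarith
        exact_mod_cast ne_of_gt this
      rw [div_eq_div_iff hden1 hden2, hmu']
      ring
    have hlim : Tendsto (fun m : ℕ =>
        (A + (r:ℂ) ^ m * (O.trace - A)) / (1 + ((d:ℂ) - 1) * (r:ℂ) ^ m)) atTop
        (nhds A) := by
      have hnum : Tendsto (fun m : ℕ => A + (r:ℂ) ^ m * (O.trace - A)) atTop
          (nhds (A + 0 * (O.trace - A))) :=
        tendsto_const_nhds.add (hrC.mul tendsto_const_nhds)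
      have hden : Tendsto (fun m : ℕ => (1:ℂ) + ((d:ℂ) - 1) * (r:ℂ) ^ m) atTop
          (nhds (1 + ((d:ℂ) - 1) * 0)) :=
        tendsto_const_nhds.add (tendsto_const_nhds.mul hrC)
      have := hnum.div hden (by simp)
      simp only [zero_mul, add_zero, mul_zero, div_one] at this
      exact this
    exact hlim.congr fun m => (key m).symm
end
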